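/- arXiv:1804.03043 — 5 statements merged into one kernel-verified Lean document; each statement's English description precedes it below -/
import Mathlib

section
/- Let M ≥ 1 and α ≥ 1 be integers and let f be a real polynomial of degree at most M. Then ∫₀^π f(cos θ) sin^α θ dθ = Σ_{u=0}^{M} χ_u f(cos(uπ/M)), where χ_u = ε_u · ω_u, with ε_0 = ε_M = 1/2 and ε_u = 1 for u = 1,…,M−1, and ω_u = (π·α!/(2^{α−1} M)) · Σ_{μ=0}^{⌊M/2⌋} ε_{2μ} (−1)^μ cos(2μuπ/M) / (Γ(α/2 − μ + 1) Γ(α/2 + μ + 1)), where a summand is understood to be 0 whenever α/2 − μ + 1 is a nonpositive integer. -/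
open Real Finset

/-- The Clenshaw–Curtis type weights `ε_u` relative to `M`:
`ε_0 = ε_M = 1/2` and `ε_u = 1` for `0 < u < M`. -/
noncomputable def ccEps (M u : ℕ) : ℝ := if u = 0 ∨ u = M then 1 / 2 else 1

/-- The quadrature weights `ω_u` for the generalized Clenshaw–Curtis quadrature with
parameter `α` and `M + 1` nodes.  Summands with `α/2 - μ + 1` a nonpositive integer are
automatically `0` since `Real.Gamma` vanishes at nonpositive integers. -/
noncomputable def ccOmega (M α u : ℕ) : ℝ :=
  π * (Nat.factorial α) / (2 ^ (α - 1) * M) *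
    ∑ μ ∈ Finset.range (M / 2 + 1),
      ccEps M (2 * μ) * (-1 : ℝ) ^ μ * Real.cos (2 * μ * u * π / M) /
        (Real.Gamma ((α : ℝ) / 2 - μ + 1) * Real.Gamma ((α : ℝ) / 2 + μ + 1))

/-! Both sides are linear in `f`, and the Chebyshev polynomials `T_n`, `n ≤ M`, span the
polynomials of degree at most `M`; since `T_n (cos θ) = cos (n θ)`, it suffices to treat
`f = T_n`. The moment `∫₀^π cos (n θ) sin^α θ dθ` vanishes for odd `n` (substitute `θ ↦ π - θ`)
and equals `evenMoment α m` for `n = 2m`: both satisfy the recursion in `α` coming from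
`sin² θ = (1 - cos 2θ) / 2`, the Gamma side through `1 / Γ(x) = x / Γ(x + 1)`, and they agree for
`α = 0, 1`. The weight `ω_u` is the discrete cosine transform
`(2 / M) ∑_μ ε_{2μ} evenMoment α μ cos (2μuπ / M)` of these moments, so the discrete
orthogonality `ε_j ∑_u ε_u cos (juπ / M) cos (nuπ / M) = (M / 2) δ_{jn}` for `j, n ≤ M` turns the
quadrature sum of `T_n` back into its moment. -/

open scoped Nat

/-- `(Gamma x)⁻¹` is the entire reciprocal Gamma function: `Real.Gamma` vanishes at its poles
and `0⁻¹ = 0`, so this recursion holds with no exceptional points. -/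
theorem Real.inv_Gamma_eq_mul_inv_Gamma_add_one (x : ℝ) :
    (Gamma x)⁻¹ = x * (Gamma (x + 1))⁻¹ := by
  rcases eq_or_ne x 0 with rfl | hx
  · simp [Gamma_zero]
  · rw [Gamma_add_one hx, mul_inv, ← mul_assoc, mul_inv_cancel₀ hx, one_mul]

theorem Real.Gamma_intCast_of_nonpos {z : ℤ} (hz : z ≤ 0) : Gamma z = 0 := by
  lift -z to ℕ using neg_nonneg.mpr hz with n hn
  rw [show (z : ℝ) = -n by rw [← neg_neg z, ← hn]; push_cast; rfl, Gamma_neg_nat_eq_zero]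

noncomputable def evenMoment (α : ℕ) (m : ℤ) : ℝ :=
  π * α ! * (-1) ^ m / 2 ^ α * (Gamma (α / 2 - m + 1))⁻¹ * (Gamma (α / 2 + m + 1))⁻¹

theorem evenMoment_add_two (α : ℕ) (m : ℤ) :
    evenMoment (α + 2) m =
      evenMoment α m / 2 - evenMoment α (m + 1) / 4 - evenMoment α (m - 1) / 4 := by
  set a : ℝ := α / 2 - m + 1
  set b : ℝ := α / 2 + m + 1
  have h₀ : (α / 2 - m + 1 : ℝ) = a := rfl
  have h₁ : (α / 2 + m + 1 : ℝ) = b := rfl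
  have ha : (α / 2 - (m + 1 : ℤ) + 1 : ℝ) = a - 1 := by push_cast; ring
  have ha' : (α / 2 - (m - 1 : ℤ) + 1 : ℝ) = a + 1 := by push_cast; ring
  have hb : (α / 2 + (m + 1 : ℤ) + 1 : ℝ) = b + 1 := by push_cast; ring
  have hb' : (α / 2 + (m - 1 : ℤ) + 1 : ℝ) = b - 1 := by push_cast; ring
  have ha₂ : ((α + 2 : ℕ) / 2 - m + 1 : ℝ) = a + 1 := by push_cast; ring
  have hb₂ : ((α + 2 : ℕ) / 2 + m + 1 : ℝ) = b + 1 := by push_cast; ring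
  have hab : a + b = α + 2 := by ring
  have hRa := inv_Gamma_eq_mul_inv_Gamma_add_one a
  have hRb := inv_Gamma_eq_mul_inv_Gamma_add_one b
  have hRa' := inv_Gamma_eq_mul_inv_Gamma_add_one (a - 1)
  have hRb' := inv_Gamma_eq_mul_inv_Gamma_add_one (b - 1)
  rw [sub_add_cancel] at hRa' hRb'
  have hσ : (-1 : ℝ) ≠ 0 := by norm_num
  -- every reciprocal Gamma factor becomes a polynomial in `a`, `b` times `1 / (Γ(a + 1) Γ(b + 1))`
  simp only [evenMoment, h₀, h₁, ha, ha', hb, hb', ha₂, hb₂, hRa', hRb', hRa, hRb,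
    Nat.factorial_succ, zpow_add_one₀ hσ, zpow_sub_one₀ hσ, pow_add]
  push_cast
  rw [show (α : ℝ) = a + b - 2 by linarith]
  field_simp
  ring

theorem evenMoment_zero (m : ℤ) : evenMoment 0 m = if m = 0 then π else 0 := by
  split_ifs with hm
  · simp [evenMoment, hm]
  rcases lt_or_gt_of_ne hm with hm | hm
  · rw [evenMoment, show ((0 : ℕ) / 2 + m + 1 : ℝ) = (m + 1 : ℤ) by push_cast; ring,
      Gamma_intCast_of_nonpos (by omega), inv_zero, mul_zero]
  · rw [evenMoment, show ((0 : ℕ) / 2 - m + 1 : ℝ) = (1 - m : ℤ) by push_cast; ring,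
      Gamma_intCast_of_nonpos (by omega), inv_zero, mul_zero, zero_mul]

theorem evenMoment_one (m : ℤ) : evenMoment 1 m = 2 / (1 - 4 * m ^ 2) := by
  have hodd : ∀ k : ℤ, ((k : ℝ) + 1 / 2) ≠ 0 := fun k h => by
    have : (2 * k + 1 : ℤ) = 0 := by exact_mod_cast (by linarith : (2 * k + 1 : ℝ) = 0)
    omega
  have h₁ : (-1 / 2 - m : ℝ) ≠ 0 := by convert hodd (-m - 1) using 1; push_cast; ring
  have h₂ : (1 / 2 - m : ℝ) ≠ 0 := by convert hodd (-m) using 1; push_cast; ring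
  have hreflect := Gamma_mul_Gamma_one_sub (3 / 2 + m)
  have hsin : sin (π * (3 / 2 + m)) = -(-1) ^ m := by
    rw [show π * (3 / 2 + m) = (π / 2 + π) + m * π by ring, sin_add_int_mul_pi, sin_add_pi,
      sin_pi_div_two]
    ring
  have hshift : Gamma (1 / 2 - m + 1) = (1 / 2 - m) * (-1 / 2 - m) * Gamma (1 - (3 / 2 + m)) := by
    rw [Gamma_add_one h₂, show (1 / 2 - m : ℝ) = (-1 / 2 - m) + 1 by ring, Gamma_add_one h₁]
    ring_nf
  have hGG : Gamma ((1 : ℕ) / 2 - m + 1) * Gamma ((1 : ℕ) / 2 + m + 1)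
      = (1 - 4 * m ^ 2) * π / (4 * (-1) ^ m) := by
    rw [Nat.cast_one, hshift, show (1 / 2 + m + 1 : ℝ) = 3 / 2 + m by ring,
      mul_assoc, mul_comm (Gamma _), hreflect, hsin]
    field_simp
    ring
  have hsq : ((-1 : ℝ) ^ m) ^ 2 = 1 := by
    rw [← zpow_natCast, ← zpow_mul, mul_comm, zpow_mul]; norm_num
  have hσ : (-1 : ℝ) ^ m ≠ 0 := zpow_ne_zero m (by norm_num)
  have h₃ : (1 - 4 * m ^ 2 : ℝ) ≠ 0 := by
    rw [show (1 - 4 * m ^ 2 : ℝ) = -4 * ((1 / 2 - m) * (-1 / 2 - m)) by ring]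
    exact mul_ne_zero (by norm_num) (mul_ne_zero h₂ h₁)
  rw [evenMoment, mul_assoc, ← mul_inv, hGG]
  field_simp
  linear_combination (4 : ℝ) * hsq

theorem integral_cos_mul_of_ne_zero {c : ℝ} (hc : c ≠ 0) :
    ∫ θ in (0 : ℝ)..π, cos (c * θ) = sin (c * π) / c := by
  rw [intervalIntegral.integral_comp_mul_left (fun x => cos x) hc, integral_cos]
  simp [div_eq_inv_mul]

theorem integral_sin_mul_of_ne_zero {c : ℝ} (hc : c ≠ 0) :
    ∫ θ in (0 : ℝ)..π, sin (c * θ) = (1 - cos (c * π)) / c := by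
  rw [intervalIntegral.integral_comp_mul_left (fun x => sin x) hc, integral_sin]
  simp [div_eq_inv_mul]

theorem intervalIntegrable_cos_mul_mul_sin_pow (c : ℝ) (α : ℕ) :
    IntervalIntegrable (fun θ => cos (c * θ) * sin θ ^ α) MeasureTheory.volume 0 π :=
  (by fun_prop : Continuous fun θ => cos (c * θ) * sin θ ^ α).intervalIntegrable _ _

theorem integral_cos_mul_mul_sin_pow_add_two (c : ℝ) (α : ℕ) :
    ∫ θ in (0 : ℝ)..π, cos (c * θ) * sin θ ^ (α + 2) =
      (∫ θ in (0 : ℝ)..π, cos (c * θ) * sin θ ^ α) / 2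
        - (∫ θ in (0 : ℝ)..π, cos ((c + 2) * θ) * sin θ ^ α) / 4
        - (∫ θ in (0 : ℝ)..π, cos ((c - 2) * θ) * sin θ ^ α) / 4 := by
  have hpoint : ∀ θ : ℝ, cos (c * θ) * sin θ ^ (α + 2) =
      cos (c * θ) * sin θ ^ α / 2 - cos ((c + 2) * θ) * sin θ ^ α / 4
        - cos ((c - 2) * θ) * sin θ ^ α / 4 := fun θ => by
    rw [add_mul, sub_mul, cos_add, cos_sub, cos_two_mul, sin_two_mul, pow_add]
    linear_combination (cos (c * θ) * sin θ ^ α) * sin_sq_add_cos_sq θ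
  have h := intervalIntegrable_cos_mul_mul_sin_pow
  simp only [hpoint]
  rw [intervalIntegral.integral_sub (((h c α).div_const 2).sub ((h (c + 2) α).div_const 4))
      ((h (c - 2) α).div_const 4),
    intervalIntegral.integral_sub ((h c α).div_const 2) ((h (c + 2) α).div_const 4),
    intervalIntegral.integral_div, intervalIntegral.integral_div, intervalIntegral.integral_div]

theorem integral_cos_two_mul_int_mul (m : ℤ) :
    ∫ θ in (0 : ℝ)..π, cos (2 * m * θ) = if m = 0 then π else 0 := by
  split_ifs with hm
  · simp [hm]
  · have hc : (2 * m : ℝ) ≠ 0 := by exact_mod_cast mul_ne_zero two_ne_zero hm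
    rw [integral_cos_mul_of_ne_zero hc, show (2 * m * π : ℝ) = (2 * m : ℤ) * π by push_cast; ring,
      sin_int_mul_pi, zero_div]

theorem integral_cos_two_mul_int_mul_mul_sin (m : ℤ) :
    ∫ θ in (0 : ℝ)..π, cos (2 * m * θ) * sin θ = 2 / (1 - 4 * m ^ 2) := by
  have hodd : ∀ k : ℤ, (2 * k + 1 : ℝ) ≠ 0 ∧ cos ((2 * k + 1) * π) = -1 := fun k => by
    refine ⟨by exact_mod_cast (by omega : 2 * k + 1 ≠ 0), ?_⟩
    rw [show ((2 * k + 1) * π : ℝ) = π + (2 * k : ℤ) * π by push_cast; ring, cos_add_int_mul_pi,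
      cos_pi, Even.neg_one_zpow ⟨k, by ring⟩]
    ring
  obtain ⟨hp, hcp⟩ := hodd m
  obtain ⟨hq, hcq⟩ := hodd (m - 1)
  push_cast at hq hcq
  have hpoint : ∀ θ : ℝ, cos (2 * m * θ) * sin θ =
      (sin ((2 * m + 1) * θ) - sin ((2 * (m - 1) + 1) * θ)) / 2 := fun θ => by
    rw [show (2 * (m - 1) + 1) * θ = 2 * m * θ - θ by ring, add_mul, one_mul, sin_add, sin_sub]
    ring
  simp only [hpoint]
  rw [intervalIntegral.integral_div, intervalIntegral.integral_sub
      ((by fun_prop : Continuous _).intervalIntegrable _ _)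
      ((by fun_prop : Continuous _).intervalIntegrable _ _),
    integral_sin_mul_of_ne_zero hp, integral_sin_mul_of_ne_zero hq, hcp, hcq]
  have : (1 - 4 * m ^ 2 : ℝ) = -((2 * m + 1) * (2 * (m - 1) + 1)) := by ring
  rw [this]
  field_simp
  ring

theorem integral_cos_two_mul_int_mul_mul_sin_pow (α : ℕ) (m : ℤ) :
    ∫ θ in (0 : ℝ)..π, cos (2 * m * θ) * sin θ ^ α = evenMoment α m := by
  induction α using Nat.twoStepInduction generalizing m with
  | zero => simpa [evenMoment_zero] using integral_cos_two_mul_int_mul m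
  | one => simpa [evenMoment_one] using integral_cos_two_mul_int_mul_mul_sin m
  | more α ih _ =>
    have hup : (2 * m + 2 : ℝ) = 2 * (m + 1 : ℤ) := by push_cast; ring
    have hdown : (2 * m - 2 : ℝ) = 2 * (m - 1 : ℤ) := by push_cast; ring
    rw [integral_cos_mul_mul_sin_pow_add_two, hup, hdown, ih, ih, ih, evenMoment_add_two]

theorem integral_cos_odd_mul_mul_sin_pow (α : ℕ) (k : ℤ) :
    ∫ θ in (0 : ℝ)..π, cos ((2 * k + 1) * θ) * sin θ ^ α = 0 := by
  have hsym := intervalIntegral.integral_comp_sub_left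
    (fun θ => cos ((2 * k + 1) * θ) * sin θ ^ α) (a := 0) (b := π) π
  have hreflect (θ : ℝ) : cos ((2 * k + 1) * (π - θ)) * sin (π - θ) ^ α =
      -(cos ((2 * k + 1) * θ) * sin θ ^ α) := by
    rw [sin_pi_sub,
      show (2 * k + 1) * (π - θ) = -((2 * k + 1) * θ) + ((2 * k + 1 : ℤ) : ℝ) * π by
        push_cast; ring,
      cos_add_int_mul_pi, cos_neg, Odd.neg_one_zpow ⟨k, rfl⟩]
    ring
  simp only [hreflect, intervalIntegral.integral_neg, sub_self, sub_zero] at hsym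
  linarith

theorem two_mul_sin_half_mul_sum_range_cos (x : ℝ) (N : ℕ) :
    2 * sin (x / 2) * ∑ u ∈ range N, cos (u * x) = sin ((N - 1 / 2) * x) + sin (x / 2) := by
  induction N with
  | zero =>
    rw [sum_range_zero, Nat.cast_zero, show (0 - 1 / 2) * x = -(x / 2) by ring, sin_neg]
    ring
  | succ N ih =>
    rw [sum_range_succ, mul_add, ih,
      show ((N + 1 : ℕ) - 1 / 2) * x = N * x + x / 2 by push_cast; ring,
      show (N - 1 / 2) * x = N * x - x / 2 by ring, sin_add, sin_sub]
    ring

theorem sum_ccEps_mul {M : ℕ} (hM : 1 ≤ M) (f : ℕ → ℝ) :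
    ∑ u ∈ range (M + 1), ccEps M u * f u = ∑ u ∈ range (M + 1), f u - f 0 / 2 - f M / 2 := by
  obtain ⟨n, rfl⟩ : ∃ n, M = n + 1 := ⟨M - 1, by omega⟩
  have hmid : ∀ i ∈ range n, ccEps (n + 1) (i + 1) * f (i + 1) = f (i + 1) := fun i hi => by
    simp [ccEps, (mem_range.mp hi).ne]
  rw [sum_range_succ, sum_range_succ', sum_congr rfl hmid, sum_range_succ (n := n + 1),
    sum_range_succ']
  simp only [ccEps, true_or, or_true, if_true]
  ring

theorem two_mul_sin_half_mul_sum_ccEps_mul_cos {M : ℕ} (hM : 1 ≤ M) (x : ℝ) :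
    2 * sin (x / 2) * ∑ u ∈ range (M + 1), ccEps M u * cos (u * x) = sin (M * x) * cos (x / 2) := by
  rw [sum_ccEps_mul hM, mul_sub, mul_sub, two_mul_sin_half_mul_sum_range_cos,
    show ((M + 1 : ℕ) - 1 / 2) * x = M * x + x / 2 by push_cast; ring, sin_add]
  simp only [Nat.cast_zero, zero_mul, cos_zero]
  ring

theorem sum_ccEps_mul_cos {M : ℕ} (hM : 1 ≤ M) (k : ℤ) :
    ∑ u ∈ range (M + 1), ccEps M u * cos (k * u * π / M) =
      if (2 * M : ℤ) ∣ k then (M : ℝ) else 0 := by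
  set x : ℝ := k * π / M with hxdef
  have hx (u : ℕ) : k * u * π / M = u * x := by ring
  simp only [hx]
  split_ifs with hk
  · obtain ⟨j, rfl⟩ := hk
    have hone (u : ℕ) : cos (u * x) = 1 := by
      rw [show u * x = (j * u : ℤ) * (2 * π) by rw [hxdef]; push_cast; field_simp,
        cos_int_mul_two_pi]
    have hsum := sum_ccEps_mul hM (fun _ => 1)
    simp only [hone, mul_one] at hsum ⊢
    rw [hsum, sum_const, card_range, nsmul_eq_mul, mul_one]
    push_cast
    ring
  · have hsin : sin (x / 2) ≠ 0 := fun h => by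
      obtain ⟨j, hj⟩ := sin_eq_zero_iff.mp h
      refine hk ⟨j, ?_⟩
      have : (k : ℝ) = 2 * M * j := by
        rw [hxdef] at hj
        field_simp at hj
        linarith
      exact_mod_cast this
    have hMx : sin (M * x) = 0 := by
      rw [show M * x = k * π by rw [hxdef]; field_simp]
      exact sin_int_mul_pi k
    apply mul_left_cancel₀ (mul_ne_zero two_ne_zero hsin)
    rw [two_mul_sin_half_mul_sum_ccEps_mul_cos hM, hMx, zero_mul, mul_zero]

theorem ccEps_mul_sum_ccEps_mul_cos_mul_cos {M : ℕ} (hM : 1 ≤ M) {j n : ℕ} (hj : j ≤ M)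
    (hn : n ≤ M) :
    ccEps M j * ∑ u ∈ range (M + 1), ccEps M u * (cos (j * u * π / M) * cos (n * u * π / M)) =
      if j = n then (M / 2 : ℝ) else 0 := by
  have hprod (u : ℕ) : cos (j * u * π / M) * cos (n * u * π / M) =
      (cos (((j + n : ℤ) : ℝ) * u * π / M) + cos (((j - n : ℤ) : ℝ) * u * π / M)) / 2 := by
    rw [show ((j + n : ℤ) : ℝ) * u * π / M = j * u * π / M + n * u * π / M by push_cast; ring,
      show ((j - n : ℤ) : ℝ) * u * π / M = j * u * π / M - n * u * π / M by push_cast; ring,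
      cos_add, cos_sub]
    ring
  have hplus : (2 * M : ℤ) ∣ (j + n : ℤ) ↔ j = n ∧ (j = 0 ∨ j = M) := by
    constructor
    · rintro ⟨c, hc⟩
      rcases le_or_gt c 0 with hc₀ | hc₀
      · have : (2 * M * c : ℤ) ≤ 0 := by nlinarith
        omega
      · have : (2 * M : ℤ) ≤ 2 * M * c := by nlinarith
        omega
    · rintro ⟨rfl, rfl | rfl⟩
      · simp
      · exact ⟨1, by ring⟩
  have hminus : (2 * M : ℤ) ∣ (j - n : ℤ) ↔ j = n := by
    constructor
    · intro h
      have := Int.eq_zero_of_abs_lt_dvd h (abs_lt.mpr ⟨by omega, by omega⟩)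
      omega
    · rintro rfl
      simp
  simp only [hprod, mul_div_assoc', mul_add, sum_add_distrib, ← sum_div, sum_ccEps_mul_cos hM,
    hplus, hminus]
  by_cases hjn : j = n
  · subst hjn
    by_cases hend : j = 0 ∨ j = M
    · simp only [ccEps, hend, if_true, and_self, add_self_div_two]
      ring
    · simp [ccEps, hend]
  · simp [hjn]

theorem ccOmega_eq_sum_evenMoment {M α : ℕ} (hα : 1 ≤ α) (u : ℕ) :
    ccOmega M α u =
      2 / M * ∑ μ ∈ range (M / 2 + 1),
        ccEps M (2 * μ) * evenMoment α μ * cos (2 * μ * u * π / M) := by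
  have h2 : (2 : ℝ) ^ α = 2 * 2 ^ (α - 1) := by rw [← pow_succ']; congr 1; omega
  rw [ccOmega, mul_sum, mul_sum]
  refine sum_congr rfl fun μ _ => ?_
  simp only [evenMoment, h2, zpow_natCast, Int.cast_natCast, div_eq_mul_inv, mul_inv]
  ring

theorem sum_ccEps_mul_ccOmega_mul_cos {M α : ℕ} (hM : 1 ≤ M) (hα : 1 ≤ α) {n : ℕ} (hn : n ≤ M) :
    ∑ u ∈ range (M + 1), ccEps M u * ccOmega M α u * cos (n * u * π / M) =
      ∫ θ in (0 : ℝ)..π, cos (n * θ) * sin θ ^ α := by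
  calc ∑ u ∈ range (M + 1), ccEps M u * ccOmega M α u * cos (n * u * π / M)
      = ∑ μ ∈ range (M / 2 + 1), 2 / M * evenMoment α μ * (ccEps M (2 * μ) *
          ∑ u ∈ range (M + 1),
            ccEps M u * (cos ((2 * μ : ℕ) * u * π / M) * cos (n * u * π / M))) := by
        simp only [ccOmega_eq_sum_evenMoment hα, mul_sum, sum_mul]
        rw [sum_comm]
        refine sum_congr rfl fun μ _ => sum_congr rfl fun u _ => ?_
        push_cast
        ring
    _ = ∑ μ ∈ range (M / 2 + 1), if 2 * μ = n then evenMoment α μ else 0 := by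
        refine sum_congr rfl fun μ hμ => ?_
        rw [ccEps_mul_sum_ccEps_mul_cos_mul_cos hM (by have := mem_range.mp hμ; omega) hn]
        split_ifs
        · field_simp
        · simp
    _ = ∫ θ in (0 : ℝ)..π, cos (n * θ) * sin θ ^ α := by
        obtain ⟨m, rfl | rfl⟩ := Nat.even_or_odd' n
        · have hm : m ∈ range (M / 2 + 1) := mem_range.mpr (by omega)
          simp only [Nat.mul_left_cancel_iff two_pos, sum_ite_eq', if_pos hm]
          have := integral_cos_two_mul_int_mul_mul_sin_pow α m
          push_cast at this ⊢
          exact this.symm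
        · simp only [show ∀ μ, 2 * μ ≠ 2 * m + 1 by omega, if_false, sum_const_zero]
          push_cast
          exact (integral_cos_odd_mul_mul_sin_pow α m).symm

open Polynomial Polynomial.Chebyshev in
theorem integral_eval_cos_mul_eq_sum_of_forall_T {M : ℕ} {g : ℝ → ℝ} (hg : Continuous g)
    {ι : Type*} (s : Finset ι) (w x : ι → ℝ)
    (hT : ∀ n ≤ M,
      ∫ θ in (0 : ℝ)..π, (T ℝ n).eval (cos θ) * g θ = ∑ i ∈ s, w i * (T ℝ n).eval (x i))
    {f : ℝ[X]} (hf : f.natDegree ≤ M) :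
    ∫ θ in (0 : ℝ)..π, f.eval (cos θ) * g θ = ∑ i ∈ s, w i * f.eval (x i) := by
  have hmem : f ∈ Submodule.span ℝ (chebyshevTsequence ℝ '' Set.Iic M) := by
    rw [Sequence.span_degreeLE _ (by simp)]
    exact mem_degreeLE.mpr (degree_le_of_natDegree_le hf)
  have hint (p : ℝ[X]) :
      IntervalIntegrable (fun θ => p.eval (cos θ) * g θ) MeasureTheory.volume 0 π :=
    (by fun_prop : Continuous fun θ => p.eval (cos θ) * g θ).intervalIntegrable _ _
  clear hf
  induction hmem using Submodule.span_induction with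
  | mem p hp =>
    obtain ⟨n, hn, rfl⟩ := hp
    exact hT n hn
  | zero => simp
  | add p q _ _ hp hq =>
    simp only [eval_add, add_mul, mul_add, sum_add_distrib]
    rw [intervalIntegral.integral_add (hint p) (hint q), hp, hq]
  | smul c p _ hp =>
    simp only [eval_smul, smul_eq_mul, mul_assoc, intervalIntegral.integral_const_mul]
    rw [hp, mul_sum]
    exact sum_congr rfl fun i _ => by ring

theorem generalized_clenshaw_curtis (M α : ℕ) (hM : 1 ≤ M) (hα : 1 ≤ α)
    (f : Polynomial ℝ) (hf : f.natDegree ≤ M) :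
    ∫ θ in (0 : ℝ)..π, f.eval (Real.cos θ) * (Real.sin θ) ^ α =
      ∑ u ∈ Finset.range (M + 1),
        (ccEps M u * ccOmega M α u) * f.eval (Real.cos (u * π / M)) := by
  refine integral_eval_cos_mul_eq_sum_of_forall_T (g := fun θ => sin θ ^ α) (by fun_prop) _ _ _
    (fun n hn => ?_) hf
  simp only [Polynomial.Chebyshev.T_real_cos, Int.cast_natCast]
  rw [← sum_ccEps_mul_ccOmega_mul_cos hM hα hn]
  exact sum_congr rfl fun u _ => by ring_nf
end

section
/- For all integers μ ≥ 0 and α ≥ 1, ∫₀^π cos(μθ) sin^α θ dθ = π · α! · cos(μπ/2) / (2^α · Γ((α−μ+2)/2) · Γ((α+μ+2)/2)), with the convention that the right-hand side equals 0 when (α−μ+2)/2 is a nonpositive integer (in particular the integral vanishes for odd μ, and for μ > α with μ, α of the same parity). -/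
/-!
Integrating by parts twice gives
`((α + 2)² - μ²) I(μ, α + 2) = (α + 2)(α + 1) I(μ, α)`, and the Gamma expression obeys the same
recurrence because `Γ(s + 1) = s Γ(s)`; for `α = 0, 1` both sides are computed directly, the
Gamma side through the reflection formula. On the diagonal `μ = ±(α + 2)` the recurrence says
nothing, and there `4 sin² θ = 2 - 2 cos 2θ` expresses `I(α + 2, α + 2)` through `I(α, α)`,
`I(α + 2, α)` and `I(α + 4, α)`, the last two of which vanish. Nothing requires `μ` to be an
integer.
-/

open Real intervalIntegral

noncomputable def cosSinPowIntegral (μ : ℝ) (α : ℕ) : ℝ :=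
  ∫ θ in (0 : ℝ)..π, cos (μ * θ) * sin θ ^ α

/-- Mathlib's `Gamma` is `0` at the poles, so this vanishes (through division by `0`) when
`(α - μ + 2) / 2` is a nonpositive integer, as in the paper's convention. -/
noncomputable def cosSinPowClosedForm (μ : ℝ) (α : ℕ) : ℝ :=
  π * α.factorial * cos (μ * π / 2) /
    (2 ^ α * Gamma (((α : ℝ) - μ + 2) / 2) * Gamma (((α : ℝ) + μ + 2) / 2))

theorem cosSinPowIntegral_neg (μ : ℝ) (α : ℕ) :
    cosSinPowIntegral (-μ) α = cosSinPowIntegral μ α := by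
  simp only [cosSinPowIntegral, neg_mul, cos_neg]

theorem cosSinPowClosedForm_neg (μ : ℝ) (α : ℕ) :
    cosSinPowClosedForm (-μ) α = cosSinPowClosedForm μ α := by
  rw [cosSinPowClosedForm, cosSinPowClosedForm, sub_neg_eq_add, ← sub_eq_add_neg, neg_mul,
    neg_div, cos_neg]
  ring

theorem integral_cos_const_mul_zero_pi {k : ℝ} (hk : k ≠ 0) :
    ∫ θ in (0 : ℝ)..π, cos (k * θ) = sin (k * π) / k := by
  simp [integral_comp_mul_left (fun x => cos x) hk, integral_cos, div_eq_inv_mul]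

theorem integral_sin_const_mul_zero_pi (k : ℝ) :
    ∫ θ in (0 : ℝ)..π, sin (k * θ) = (1 - cos (k * π)) / k := by
  rcases eq_or_ne k 0 with rfl | hk
  · simp
  · simp [integral_comp_mul_left (fun x => sin x) hk, integral_sin, div_eq_inv_mul]

theorem cosSinPowIntegral_zero {μ : ℝ} (hμ : μ ≠ 0) :
    cosSinPowIntegral μ 0 = sin (μ * π) / μ := by
  simp only [cosSinPowIntegral, pow_zero, mul_one, integral_cos_const_mul_zero_pi hμ]

theorem cosSinPowClosedForm_zero {μ : ℝ} (hμ : μ ≠ 0) :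
    cosSinPowClosedForm μ 0 = sin (μ * π) / μ := by
  have hs : μ / 2 ≠ 0 := div_ne_zero hμ two_ne_zero
  have reflection := Gamma_mul_Gamma_one_sub (μ / 2)
  have double_angle : sin (μ * π) = 2 * sin (μ * π / 2) * cos (μ * π / 2) := by
    rw [← sin_two_mul]; ring_nf
  rw [show π * (μ / 2) = μ * π / 2 by ring] at reflection
  rw [cosSinPowClosedForm, show ((0 : ℕ) - μ + 2) / 2 = 1 - μ / 2 by push_cast; ring,
    show ((0 : ℕ) + μ + 2) / 2 = μ / 2 + 1 by push_cast; ring, Gamma_add_one hs,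
    show 2 ^ 0 * Gamma (1 - μ / 2) * (μ / 2 * Gamma (μ / 2)) =
      μ / 2 * (Gamma (μ / 2) * Gamma (1 - μ / 2)) by ring, reflection, double_angle]
  rcases eq_or_ne (sin (μ * π / 2)) 0 with h | h
  · simp [h]
  · field_simp
    ring

theorem cosSinPowIntegral_one (μ : ℝ) :
    cosSinPowIntegral μ 1 = (1 + cos (μ * π)) / (1 - μ ^ 2) := by
  have product_to_sum : ∀ θ, cos (μ * θ) * sin θ ^ 1 =
      (sin ((μ + 1) * θ) - sin ((μ - 1) * θ)) / 2 := fun θ => by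
    rw [add_mul, sub_mul, one_mul, sin_add, sin_sub]; ring
  have hcos : ∀ ε : ℝ, ε ^ 2 = 1 → cos ((μ + ε) * π) = - cos (μ * π) := fun ε hε => by
    rcases sq_eq_one_iff.mp hε with rfl | rfl
    · rw [add_mul, one_mul, cos_add_pi]
    · rw [add_mul, neg_one_mul, ← sub_eq_add_neg, cos_sub_pi]
  simp only [cosSinPowIntegral, product_to_sum]
  rw [integral_div, integral_sub ((by fun_prop : Continuous _).intervalIntegrable _ _)
    ((by fun_prop : Continuous _).intervalIntegrable _ _), integral_sin_const_mul_zero_pi,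
    integral_sin_const_mul_zero_pi, sub_eq_add_neg μ 1, hcos 1 (one_pow 2),
    hcos (-1) neg_one_sq]
  rcases eq_or_ne (μ + 1) 0 with h | hp
  · rw [eq_neg_of_add_eq_zero_left h, neg_mul, cos_neg, one_mul, cos_pi]; simp
  rcases eq_or_ne (μ + -1) 0 with h | hm
  · rw [show μ = 1 by linarith, one_mul, cos_pi]; simp
  have : 1 - μ ^ 2 ≠ 0 := by
    rw [show 1 - μ ^ 2 = -((μ + 1) * (μ + -1)) by ring]
    exact neg_ne_zero.mpr (mul_ne_zero hp hm)
  field_simp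
  ring

theorem cosSinPowClosedForm_one (μ : ℝ) :
    cosSinPowClosedForm μ 1 = (1 + cos (μ * π)) / (1 - μ ^ 2) := by
  have double_angle : 1 + cos (μ * π) = 2 * cos (μ * π / 2) ^ 2 := by
    rw [cos_sq, show 2 * (μ * π / 2) = μ * π by ring]; ring
  rcases eq_or_ne (cos (μ * π / 2)) 0 with hc | hc
  · simp [cosSinPowClosedForm, hc, double_angle]
  set u := (1 + μ) / 2
  have hu : u ≠ 0 := by
    rintro h
    rw [show μ = -1 by linarith [show (1 + μ) / 2 = 0 from h], neg_one_mul, neg_div, cos_neg,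
      cos_pi_div_two] at hc
    exact hc rfl
  have hu' : 1 - u ≠ 0 := by
    rintro h
    rw [show μ = 1 by linarith [show 1 - (1 + μ) / 2 = 0 from h], one_mul, cos_pi_div_two] at hc
    exact hc rfl
  have reflection := Gamma_mul_Gamma_one_sub u
  rw [show π * u = μ * π / 2 + π / 2 by ring, sin_add_pi_div_two] at reflection
  rw [cosSinPowClosedForm, show ((1 : ℕ) - μ + 2) / 2 = (1 - u) + 1 by push_cast; ring,
    show ((1 : ℕ) + μ + 2) / 2 = u + 1 by push_cast; ring, Gamma_add_one hu, Gamma_add_one hu',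
    show 2 ^ 1 * ((1 - u) * Gamma (1 - u)) * (u * Gamma u) =
      2 * (u * (1 - u)) * (Gamma u * Gamma (1 - u)) by ring, reflection,
    double_angle, show (1 : ℝ) - μ ^ 2 = 4 * (u * (1 - u)) by ring, Nat.factorial_one]
  field_simp
  ring

theorem intervalIntegrable_cos_mul_sin_pow (μ : ℝ) (α : ℕ) (a b : ℝ) :
    IntervalIntegrable (fun θ => cos (μ * θ) * sin θ ^ α) MeasureTheory.volume a b :=
  (by fun_prop : Continuous _).intervalIntegrable a b

theorem hasDerivAt_cos_mul_sin_pow_antideriv (μ : ℝ) (α : ℕ) (θ : ℝ) :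
    HasDerivAt
      (fun θ => (α + 2) * (cos (μ * θ) * sin θ ^ (α + 1) * cos θ) +
        μ * (sin (μ * θ) * sin θ ^ (α + 2)))
      ((α + 2) * (α + 1) * (cos (μ * θ) * sin θ ^ α)
        - ((α + 2) ^ 2 - μ ^ 2) * (cos (μ * θ) * sin θ ^ (α + 2))) θ := by
  have hμθ : HasDerivAt (fun θ => μ * θ) μ θ := by simpa using (hasDerivAt_id θ).const_mul μ
  have hsin_pow : ∀ n : ℕ, HasDerivAt (fun θ => sin θ ^ (n + 1)) ((n + 1) * sin θ ^ n * cos θ) θ :=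
    fun n => by simpa using (hasDerivAt_sin θ).fun_pow (n + 1)
  have hsum := ((((hμθ.cos.fun_mul (hsin_pow α)).fun_mul (hasDerivAt_cos θ)).const_mul
    ((α : ℝ) + 2)).fun_add ((hμθ.sin.fun_mul (hsin_pow (α + 1))).const_mul μ))
  refine hsum.congr_deriv ?_
  push_cast
  linear_combination (α + 2) * (α + 1) * cos (μ * θ) * sin θ ^ α * sin_sq_add_cos_sq θ

theorem sq_sub_sq_mul_cosSinPowIntegral_add_two (μ : ℝ) (α : ℕ) :
    ((α + 2) ^ 2 - μ ^ 2) * cosSinPowIntegral μ (α + 2) =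
      (α + 2) * (α + 1) * cosSinPowIntegral μ α := by
  have hint := intervalIntegrable_cos_mul_sin_pow μ
  have hboundary : ∫ θ in (0 : ℝ)..π, ((α + 2) * (α + 1) * (cos (μ * θ) * sin θ ^ α)
      - ((α + 2) ^ 2 - μ ^ 2) * (cos (μ * θ) * sin θ ^ (α + 2))) = 0 := by
    rw [integral_eq_sub_of_hasDerivAt (fun θ _ => hasDerivAt_cos_mul_sin_pow_antideriv μ α θ)
      (((hint α 0 π).const_mul _).sub ((hint (α + 2) 0 π).const_mul _))]
    simp
  rw [integral_sub ((hint α 0 π).const_mul _) ((hint (α + 2) 0 π).const_mul _),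
    integral_const_mul, integral_const_mul] at hboundary
  unfold cosSinPowIntegral
  linarith

theorem sq_sub_sq_mul_cosSinPowClosedForm_add_two (μ : ℝ) (α : ℕ) :
    ((α + 2) ^ 2 - μ ^ 2) * cosSinPowClosedForm μ (α + 2) =
      (α + 2) * (α + 1) * cosSinPowClosedForm μ α := by
  unfold cosSinPowClosedForm
  set s := ((α : ℝ) - μ + 2) / 2
  set t := ((α : ℝ) + μ + 2) / 2
  rcases eq_or_ne s 0 with hs | hs
  · rw [show (α + 2 : ℝ) ^ 2 - μ ^ 2 = 4 * s * t by ring, hs, Gamma_zero]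
    simp
  rcases eq_or_ne t 0 with ht | ht
  · rw [show (α + 2 : ℝ) ^ 2 - μ ^ 2 = 4 * s * t by ring, ht, Gamma_zero]
    simp
  rw [show (((α + 2 : ℕ) : ℝ) - μ + 2) / 2 = s + 1 by
    push_cast; ring, show (((α + 2 : ℕ) : ℝ) + μ + 2) / 2 = t + 1 by push_cast; ring,
    Gamma_add_one hs, Gamma_add_one ht, Nat.factorial_succ, Nat.factorial_succ,
    show (α + 2 : ℝ) ^ 2 - μ ^ 2 = 4 * s * t by ring]
  push_cast
  field_simp
  ring

theorem four_mul_cosSinPowIntegral_add_two (μ : ℝ) (α : ℕ) :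
    4 * cosSinPowIntegral μ (α + 2) =
      2 * cosSinPowIntegral μ α - cosSinPowIntegral (μ + 2) α - cosSinPowIntegral (μ - 2) α := by
  have hint := fun ν => intervalIntegrable_cos_mul_sin_pow ν α 0 π
  have product_to_sum : ∀ θ, 4 * (cos (μ * θ) * sin θ ^ (α + 2)) = 2 * (cos (μ * θ) * sin θ ^ α)
      - cos ((μ + 2) * θ) * sin θ ^ α - cos ((μ - 2) * θ) * sin θ ^ α := fun θ => by
    rw [add_mul, sub_mul, cos_add, cos_sub, cos_two_mul]
    linear_combination 4 * cos (μ * θ) * sin θ ^ α * sin_sq_add_cos_sq θ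
  simp only [cosSinPowIntegral]
  rw [← integral_const_mul, ← integral_const_mul, ← integral_sub ((hint μ).const_mul 2) (hint _),
    ← integral_sub (((hint μ).const_mul 2).sub (hint _)) (hint _)]
  simp only [product_to_sum]

theorem cosSinPowClosedForm_self (n : ℕ) :
    cosSinPowClosedForm n n = π * cos (n * π / 2) / 2 ^ n := by
  rw [cosSinPowClosedForm, show ((n : ℝ) - n + 2) / 2 = 1 by ring,
    show ((n : ℝ) + n + 2) / 2 = n + 1 by ring, Gamma_one, Gamma_nat_eq_factorial]
  field_simp

theorem cosSinPowClosedForm_eq_zero {μ : ℝ} {α : ℕ} (k : ℕ) (hμ : μ = α + 2 * (k + 1)) :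
    cosSinPowClosedForm μ α = 0 := by
  rw [cosSinPowClosedForm, show ((α : ℝ) - μ + 2) / 2 = -k by rw [hμ]; ring,
    Gamma_neg_nat_eq_zero]
  simp

theorem cosSinPowIntegral_add_two_self {α : ℕ}
    (ih : ∀ μ, cosSinPowIntegral μ α = cosSinPowClosedForm μ α) :
    cosSinPowIntegral (α + 2) (α + 2) = cosSinPowClosedForm (α + 2) (α + 2) := by
  have h := four_mul_cosSinPowIntegral_add_two (α + 2) α
  have h2 : cosSinPowClosedForm (α + 2) α = 0 := cosSinPowClosedForm_eq_zero 0 (by push_cast; ring)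
  have h4 : cosSinPowClosedForm (α + 2 + 2) α = 0 :=
    cosSinPowClosedForm_eq_zero 1 (by push_cast; ring)
  simp only [ih, add_sub_cancel_right, cosSinPowClosedForm_self, h2, h4] at h
  have hdiag := cosSinPowClosedForm_self (α + 2)
  push_cast at hdiag
  rw [hdiag, add_mul, add_div, show 2 * π / 2 = π by ring, cos_add_pi, pow_add]
  linear_combination h / 4

theorem cosSinPowIntegral_eq_closedForm : ∀ (α : ℕ) (μ : ℝ),
    cosSinPowIntegral μ α = cosSinPowClosedForm μ α
  | 0, μ => by
    rcases eq_or_ne μ 0 with rfl | hμ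
    · simp [cosSinPowIntegral, cosSinPowClosedForm]
    · rw [cosSinPowIntegral_zero hμ, cosSinPowClosedForm_zero hμ]
  | 1, μ => (cosSinPowIntegral_one μ).trans (cosSinPowClosedForm_one μ).symm
  | α + 2, μ => by
    have ih := cosSinPowIntegral_eq_closedForm α
    rcases eq_or_ne (μ ^ 2) (((α : ℝ) + 2) ^ 2) with hsq | hsq
    · obtain rfl | rfl := sq_eq_sq_iff_eq_or_eq_neg.mp hsq
      · exact cosSinPowIntegral_add_two_self ih
      · rw [cosSinPowIntegral_neg, cosSinPowClosedForm_neg]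
        exact cosSinPowIntegral_add_two_self ih
    · apply mul_left_cancel₀ (sub_ne_zero.mpr hsq.symm)
      rw [sq_sub_sq_mul_cosSinPowIntegral_add_two, ih, sq_sub_sq_mul_cosSinPowClosedForm_add_two]

theorem integral_cos_mul_sin_pow_general (μ α : ℕ) :
    ∫ θ in (0 : ℝ)..π, Real.cos (μ * θ) * (Real.sin θ) ^ α =
      π * (Nat.factorial α) * Real.cos (μ * π / 2) /
        (2 ^ α * Real.Gamma (((α : ℝ) - μ + 2) / 2) * Real.Gamma (((α : ℝ) + μ + 2) / 2)) :=
  cosSinPowIntegral_eq_closedForm α μ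

/-- The integral of a single frequency `cos (μθ)` against the weight `sin^α θ` on `[0, π]`.
The convention that the right-hand side vanishes when `(α - μ + 2)/2` is a nonpositive
integer is automatic, since `Real.Gamma` vanishes at nonpositive integers and division by
zero equals zero. -/
theorem integral_cos_mul_sin_pow (μ α : ℕ) (hα : 1 ≤ α) :
    ∫ θ in (0 : ℝ)..π, Real.cos (μ * θ) * (Real.sin θ) ^ α =
      π * (Nat.factorial α) * Real.cos (μ * π / 2) /
        (2 ^ α * Real.Gamma (((α : ℝ) - μ + 2) / 2) * Real.Gamma (((α : ℝ) + μ + 2) / 2)) :=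
  integral_cos_mul_sin_pow_general μ α
end

section
/- Fix a real λ > 0. As m → ∞ (m ranging over positive integers), the following asymptotic equivalences hold: ((2m+2λ+1)/(2m))² − 1 ~ (2λ+1)/m; m(m+2λ+1)(2λ+1)/(2λ+3) ~ ((2λ+1)/(2λ+3))·m²; and the uncertainty product U(Φ_m) = √(var_S(Φ_m))·√(var_M(Φ_m)) = √[(((2m+2λ+1)/(2m))² − 1) · m(m+2λ+1)(2λ+1)/(2λ+3)] ~ ((2λ+1)/√(2λ+3))·m^{1/2}. -/
open Real Filter

/-- Asymptotic behavior, as `m → ∞`, of the space variance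
`var_S(Φ_m) = ((2m+2λ+1)/(2m))² − 1`, the momentum variance
`var_M(Φ_m) = m(m+2λ+1)(2λ+1)/(2λ+3)` and the uncertainty product
`U(Φ_m) = √(var_S(Φ_m))·√(var_M(Φ_m))` of the weighted scaling functions. -/
theorem asymptotics_in_scale (lam : ℝ) (hlam : 0 < lam) :
    Tendsto (fun m : ℕ =>
        (((2 * (m : ℝ) + 2 * lam + 1) / (2 * (m : ℝ))) ^ 2 - 1) / ((2 * lam + 1) / (m : ℝ)))
        atTop (nhds 1) ∧
      Tendsto (fun m : ℕ =>
          ((m : ℝ) * ((m : ℝ) + 2 * lam + 1) * (2 * lam + 1) / (2 * lam + 3)) /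
            ((2 * lam + 1) / (2 * lam + 3) * (m : ℝ) ^ 2))
          atTop (nhds 1) ∧
        Tendsto (fun m : ℕ =>
            (Real.sqrt ((((2 * (m : ℝ) + 2 * lam + 1) / (2 * (m : ℝ))) ^ 2 - 1)) *
                Real.sqrt ((m : ℝ) * ((m : ℝ) + 2 * lam + 1) * (2 * lam + 1) / (2 * lam + 3))) /
              ((2 * lam + 1) / Real.sqrt (2 * lam + 3) * Real.sqrt (m : ℝ)))
            atTop (nhds 1) := by
  set f1 : ℕ → ℝ := fun m =>
    (((2 * (m : ℝ) + 2 * lam + 1) / (2 * (m : ℝ))) ^ 2 - 1) / ((2 * lam + 1) / (m : ℝ)) with hf1def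
  set f2 : ℕ → ℝ := fun m =>
    ((m : ℝ) * ((m : ℝ) + 2 * lam + 1) * (2 * lam + 1) / (2 * lam + 3)) /
      ((2 * lam + 1) / (2 * lam + 3) * (m : ℝ) ^ 2) with hf2def
  have hl1 : (0:ℝ) < 2 * lam + 1 := by linarith
  have hl3 : (0:ℝ) < 2 * lam + 3 := by linarith
  have e1 : ∀ m : ℕ, 1 ≤ m → f1 m = 1 + (2 * lam + 1) / (4 * (m : ℝ)) := by
    intro m hm
    have hm' : (0:ℝ) < m := by exact_mod_cast hm
    simp only [hf1def]
    field_simp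
    ring
  have e2 : ∀ m : ℕ, 1 ≤ m → f2 m = 1 + (2 * lam + 1) / (m : ℝ) := by
    intro m hm
    have hm' : (0:ℝ) < m := by exact_mod_cast hm
    simp only [hf2def]
    field_simp
    ring
  have hc : Tendsto (fun m : ℕ => ((2 * lam + 1) : ℝ) / (m : ℝ)) atTop (nhds 0) :=
    tendsto_const_div_atTop_nhds_zero_nat _
  have hc4 : Tendsto (fun m : ℕ => ((2 * lam + 1) : ℝ) / (4 * (m : ℝ))) atTop (nhds 0) := by
    have := tendsto_const_div_atTop_nhds_zero_nat ((2 * lam + 1) / 4)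
    convert this using 2 with m
    rw [div_div]
  have h1 : Tendsto f1 atTop (nhds 1) := by
    have : Tendsto (fun m : ℕ => 1 + (2 * lam + 1) / (4 * (m : ℝ))) atTop (nhds 1) := by
      simpa using tendsto_const_nhds.add hc4
    refine this.congr' ?_
    filter_upwards [eventually_ge_atTop 1] with m hm
    exact (e1 m hm).symm
  have h2 : Tendsto f2 atTop (nhds 1) := by
    have : Tendsto (fun m : ℕ => 1 + (2 * lam + 1) / (m : ℝ)) atTop (nhds 1) := by
      simpa using tendsto_const_nhds.add hc
    refine this.congr' ?_
    filter_upwards [eventually_ge_atTop 1] with m hm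
    exact (e2 m hm).symm
  refine ⟨h1, h2, ?_⟩
  have h12 : Tendsto (fun m : ℕ => Real.sqrt (f1 m * f2 m)) atTop (nhds 1) := by
    have := (h1.mul h2).sqrt
    simpa using this
  refine h12.congr' ?_
  filter_upwards [eventually_ge_atTop 1] with m hm
  have hm' : (0:ℝ) < m := by exact_mod_cast hm
  set A : ℝ := ((2 * (m : ℝ) + 2 * lam + 1) / (2 * (m : ℝ))) ^ 2 - 1 with hA
  set B : ℝ := (m : ℝ) * ((m : ℝ) + 2 * lam + 1) * (2 * lam + 1) / (2 * lam + 3) with hB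
  have hA0 : 0 ≤ A := by
    have hx : (1:ℝ) ≤ (2 * (m : ℝ) + 2 * lam + 1) / (2 * (m : ℝ)) := by
      rw [le_div_iff₀ (by linarith)]
      linarith
    have := one_le_pow₀ hx (n := 2)
    simp only [hA]
    linarith
  have hsq3 : Real.sqrt (2 * lam + 3) > 0 := Real.sqrt_pos.mpr hl3
  have key : f1 m * f2 m = A * B / (((2 * lam + 1) / Real.sqrt (2 * lam + 3)) ^ 2 * (m : ℝ)) := by
    have hs : Real.sqrt (2 * lam + 3) ^ 2 = 2 * lam + 3 := Real.sq_sqrt hl3.le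
    simp only [hf1def, hf2def, ← hA, ← hB]
    rw [div_pow, hs]
    field_simp
  have hden : (0:ℝ) ≤ (2 * lam + 1) / Real.sqrt (2 * lam + 3) := by positivity
  calc Real.sqrt (f1 m * f2 m)
      = Real.sqrt (A * B) / Real.sqrt (((2 * lam + 1) / Real.sqrt (2 * lam + 3)) ^ 2 * (m : ℝ)) := by
        have hB0 : (0:ℝ) ≤ B := by simp only [hB]; positivity
        rw [key, Real.sqrt_div (mul_nonneg hA0 hB0)]
    _ = Real.sqrt A * Real.sqrt B / ((2 * lam + 1) / Real.sqrt (2 * lam + 3) * Real.sqrt (m : ℝ)) := by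
        rw [Real.sqrt_mul hA0, Real.sqrt_mul (by positivity), Real.sqrt_sq hden]
end

section
/- Fix an integer m > 1. As λ → ∞ (λ real, λ > 0), the following asymptotic equivalences hold: var_S(Φ_m) = ((2m+2λ+1)/(2m))² − 1 ~ λ²/m²; var_M(Φ_m) = m(m+2λ+1)(2λ+1)/(2λ+3) ~ 2mλ; and the uncertainty product U(Φ_m) = √(var_S(Φ_m))·√(var_M(Φ_m)) ~ (2/m)^{1/2}·λ^{3/2}. -/
/-!
Every factor of the two variances is affine in `λ`, hence asymptotic to its leading term.
Asymptotic equivalence survives products, quotients, square roots and the addition of a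
constant to an unbounded function, so the leading terms can be multiplied out directly.
-/

open Real Filter Asymptotics

theorem Asymptotics.IsEquivalent.sqrt {α : Type*} {l : Filter α} {u v : α → ℝ} (h : u ~[l] v) :
    (fun x => √(u x)) ~[l] fun x => √(v x) := by
  obtain ⟨φ, hφ, huφv⟩ := h.exists_eq_mul
  refine isEquivalent_iff_exists_eq_mul.mpr ⟨fun x => √(φ x), by simpa using hφ.sqrt, ?_⟩
  filter_upwards [huφv, hφ.eventually_const_lt zero_lt_one] with x hx hφx
  simp only [hx, Pi.mul_apply, Real.sqrt_mul hφx.le]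

theorem tendsto_norm_const_mul_atTop {a : ℝ} (ha : a ≠ 0) :
    Tendsto (fun x : ℝ => ‖a * x‖) atTop atTop := by
  simpa only [norm_mul] using
    tendsto_norm_atTop_atTop.const_mul_atTop (norm_pos_iff.mpr ha)

theorem isEquivalent_const_mul_add {a : ℝ} (ha : a ≠ 0) (b : ℝ) :
    (fun x : ℝ => a * x + b) ~[atTop] fun x => a * x :=
  IsEquivalent.refl.add_const_of_norm_tendsto_atTop (tendsto_norm_const_mul_atTop ha)

noncomputable section

def spaceVariance (m lam : ℝ) : ℝ := ((2 * m + 2 * lam + 1) / (2 * m)) ^ 2 - 1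

def momentumVariance (m lam : ℝ) : ℝ := m * (m + 2 * lam + 1) * (2 * lam + 1) / (2 * lam + 3)

def uncertaintyProduct (m lam : ℝ) : ℝ := √(spaceVariance m lam) * √(momentumVariance m lam)

theorem spaceVariance_isEquivalent {m : ℝ} (hm : m ≠ 0) :
    spaceVariance m ~[atTop] fun lam => lam ^ 2 / m ^ 2 := by
  have hlin := isEquivalent_const_mul_add (inv_ne_zero hm) ((2 * m + 1) / (2 * m))
  have hnorm : Tendsto (norm ∘ fun lam : ℝ => (m⁻¹ * lam) ^ 2) atTop atTop := by
    simpa only [Function.comp_def, norm_pow] using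
      (tendsto_pow_atTop two_ne_zero).comp (tendsto_norm_const_mul_atTop (inv_ne_zero hm))
  refine ((hlin.pow 2).add_const_of_norm_tendsto_atTop hnorm (c := -1)).congr_left
    (Eventually.of_forall fun lam => ?_) |>.congr_right (Eventually.of_forall fun lam => ?_)
  · simp only [spaceVariance, Pi.pow_apply]
    field_simp
    ring
  · simp only [Pi.pow_apply]
    field_simp

theorem momentumVariance_isEquivalent {m : ℝ} (hm : m ≠ 0) :
    momentumVariance m ~[atTop] fun lam => 2 * m * lam := by
  have h := (((IsEquivalent.refl (u := fun _ => m)).mul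
    (isEquivalent_const_mul_add two_ne_zero (m + 1))).mul
    (isEquivalent_const_mul_add two_ne_zero 1)).div (isEquivalent_const_mul_add two_ne_zero 3)
  refine (h.congr_left (Eventually.of_forall fun lam => ?_)).congr_right ?_
  · simp only [momentumVariance, Pi.mul_apply, Pi.div_apply]
    ring
  · filter_upwards [eventually_ne_atTop 0] with lam hlam
    simp only [Pi.mul_apply, Pi.div_apply]
    field_simp

theorem uncertaintyProduct_isEquivalent {m : ℝ} (hm : 0 < m) :
    uncertaintyProduct m ~[atTop] fun lam => √(2 / m) * lam ^ ((3 : ℝ) / 2) := by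
  refine ((spaceVariance_isEquivalent hm.ne').sqrt.mul
    (momentumVariance_isEquivalent hm.ne').sqrt).congr_right ?_
  filter_upwards [eventually_ge_atTop 0] with lam hlam
  have hsq : lam ^ 2 / m ^ 2 * (2 * m * lam) = 2 / m * lam ^ 3 := by
    field_simp
  simp only [Pi.mul_apply]
  rw [← Real.sqrt_mul (by positivity), hsq, Real.sqrt_mul (by positivity),
    Real.sqrt_eq_rpow (lam ^ 3), ← Real.rpow_natCast, ← Real.rpow_mul hlam]
  norm_num

end

/-- Asymptotic behavior, as `λ → ∞` (real `λ`) for a fixed scale `m > 1`, of the space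
variance `var_S(Φ_m) = ((2m+2λ+1)/(2m))² − 1`, the momentum variance
`var_M(Φ_m) = m(m+2λ+1)(2λ+1)/(2λ+3)` and the uncertainty product
`U(Φ_m) = √(var_S(Φ_m))·√(var_M(Φ_m))` of the weighted scaling functions. -/
theorem asymptotics_in_dimension (m : ℕ) (hm : 1 < m) :
    Tendsto (fun lam : ℝ =>
        (((2 * (m : ℝ) + 2 * lam + 1) / (2 * (m : ℝ))) ^ 2 - 1) / (lam ^ 2 / (m : ℝ) ^ 2))
        atTop (nhds 1) ∧
      Tendsto (fun lam : ℝ =>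
          ((m : ℝ) * ((m : ℝ) + 2 * lam + 1) * (2 * lam + 1) / (2 * lam + 3)) /
            (2 * (m : ℝ) * lam))
          atTop (nhds 1) ∧
        Tendsto (fun lam : ℝ =>
            (Real.sqrt ((((2 * (m : ℝ) + 2 * lam + 1) / (2 * (m : ℝ))) ^ 2 - 1)) *
                Real.sqrt ((m : ℝ) * ((m : ℝ) + 2 * lam + 1) * (2 * lam + 1) / (2 * lam + 3))) /
              (Real.sqrt (2 / (m : ℝ)) * lam ^ ((3 : ℝ) / 2)))
            atTop (nhds 1) := by
  have hm0 : (0 : ℝ) < m := by exact_mod_cast Nat.zero_lt_of_lt hm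
  have hpos : ∀ᶠ lam : ℝ in atTop, 0 < lam := eventually_gt_atTop 0
  refine ⟨?_, ?_, ?_⟩
  · refine (isEquivalent_iff_tendsto_one ?_).mp (spaceVariance_isEquivalent hm0.ne')
    filter_upwards [hpos] with lam hlam
    positivity
  · refine (isEquivalent_iff_tendsto_one ?_).mp (momentumVariance_isEquivalent hm0.ne')
    filter_upwards [hpos] with lam hlam
    positivity
  · refine (isEquivalent_iff_tendsto_one ?_).mp (uncertaintyProduct_isEquivalent hm0)
    filter_upwards [hpos] with lam hlam
    positivity
end

section
/- For every fixed integer n ≥ 2, lim_{j→∞} (n+2^j−2)·(n+2^{j−1}−2)! / (2^{nj}·n!·(2^{j−1}−1)!) = 2^{1−n}/n!. -/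
/-!
With `m = 2^{j-1}` we have `2^{nj} = (2m)^n`, and `(n+m-2)!/(m-1)!` is the rising factorial
`m (m+1) ⋯ (m+n-2) ~ m^{n-1}`, while `n + 2^j - 2 ~ 2m`. Hence the quantity is asymptotic to
`2m · m^{n-1} / ((2m)^n n!) = 2^{1-n}/n!`.
-/

open Filter Finset Topology
open scoped Nat

theorem Nat.tendsto_ascFactorial_div_pow (k : ℕ) :
    Tendsto (fun m : ℕ => (m.ascFactorial k : ℝ) / (m : ℝ) ^ k) atTop (𝓝 1) := by
  have hterm (i : ℕ) : Tendsto (fun m : ℕ => 1 + (i : ℝ) / m) atTop (𝓝 1) := by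
    simpa using (tendsto_const_div_atTop_nhds_zero_nat (i : ℝ)).const_add 1
  have hprod := tendsto_finsetProd (range k) fun i _ => hterm i
  rw [prod_const_one] at hprod
  refine hprod.congr' ?_
  filter_upwards [eventually_ge_atTop 1] with m hm
  have hm : (m : ℝ) ≠ 0 := by positivity
  rw [Nat.ascFactorial_eq_prod_range, Nat.cast_prod, ← card_range k, ← prod_const,
    card_range, ← prod_div_distrib]
  refine prod_congr rfl fun i _ => ?_
  push_cast
  field_simp

theorem Nat.factorial_add_sub_one (m k : ℕ) (hm : 1 ≤ m) :
    (k + m - 1)! = (m - 1)! * m.ascFactorial k := by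
  obtain ⟨m, rfl⟩ := Nat.exists_eq_add_of_le' hm
  rw [Nat.add_sub_cancel, Nat.factorial_mul_ascFactorial]
  congr 1
  omega

/-- `‖φ_j‖²` in terms of `m = 2^{j-1}`. -/
noncomputable def scalingNormSq (n m : ℕ) : ℝ :=
  (((n + 2 * m - 2) * (n + m - 2)! : ℕ) : ℝ) / ((2 * m : ℝ) ^ n * n ! * (m - 1)!)

theorem scalingNormSq_eq (n m : ℕ) (hn : 1 ≤ n) (hm : 1 ≤ m) :
    scalingNormSq n m =
      (1 + ((n : ℝ) - 2) / (2 * m)) * ((m.ascFactorial (n - 1) : ℝ) / m ^ (n - 1)) *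
        (2 ^ ((1 : ℤ) - n) / n !) := by
  obtain ⟨k, rfl⟩ := Nat.exists_eq_add_of_le' hn
  have hm' : (m : ℝ) ≠ 0 := by positivity
  rw [scalingNormSq, show k + 1 + m - 2 = k + m - 1 by omega, Nat.factorial_add_sub_one m k hm,
    show (1 : ℤ) - (k + 1 : ℕ) = -(k : ℤ) by push_cast; ring, zpow_neg, zpow_natCast,
    Nat.add_sub_cancel]
  push_cast [show 2 ≤ k + 1 + 2 * m by omega]
  field_simp
  ring

theorem tendsto_scalingNormSq (n : ℕ) (hn : 1 ≤ n) :
    Tendsto (scalingNormSq n) atTop (𝓝 (2 ^ ((1 : ℤ) - n) / n !)) := by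
  have hfirst : Tendsto (fun m : ℕ => 1 + ((n : ℝ) - 2) / (2 * m)) atTop (𝓝 1) := by
    simpa [div_mul_eq_div_div] using
      (tendsto_const_div_atTop_nhds_zero_nat (((n : ℝ) - 2) / 2)).const_add 1
  have h := (hfirst.mul (Nat.tendsto_ascFactorial_div_pow (n - 1))).mul_const
    ((2 : ℝ) ^ ((1 : ℤ) - n) / n !)
  rw [one_mul, one_mul] at h
  refine h.congr' ?_
  filter_upwards [eventually_ge_atTop 1] with m hm
  exact (scalingNormSq_eq n m hn hm).symm

/-- The squared `L²`-norms `‖φ_j‖² = (n+2^j−2)(n+2^{j−1}−2)!/(2^{nj} n! (2^{j−1}−1)!)` of the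
weighted scaling functions converge to `2^{1−n}/n!` as `j → ∞`. -/
theorem norm_scaling_function_limit (n : ℕ) (hn : 2 ≤ n) :
    Tendsto (fun j : ℕ =>
        (((n + 2 ^ j - 2) * Nat.factorial (n + 2 ^ (j - 1) - 2) : ℕ) : ℝ) /
          ((2 : ℝ) ^ (n * j) * (Nat.factorial n : ℝ) *
            (Nat.factorial (2 ^ (j - 1) - 1) : ℝ)))
      atTop (nhds ((2 : ℝ) ^ ((1 : ℤ) - (n : ℤ)) / (Nat.factorial n : ℝ))) := by
  have hpow : Tendsto (fun j : ℕ => 2 ^ (j - 1)) atTop atTop :=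
    (tendsto_pow_atTop_atTop_of_one_lt one_lt_two).comp (tendsto_sub_atTop_nat 1)
  refine ((tendsto_scalingNormSq n (by omega)).comp hpow).congr' ?_
  filter_upwards [eventually_ge_atTop 1] with j hj
  obtain ⟨i, rfl⟩ := Nat.exists_eq_add_of_le' hj
  simp only [Function.comp_apply, scalingNormSq, Nat.add_sub_cancel, mul_comm n, pow_mul,
    pow_succ']
  push_cast
  rfl
end
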